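/- Let R be a commutative noetherian ring, X a finitely generated reflexive R-module with Ext^1_R(X, R) = 0 which fits in a short exact sequence 0 → X* → P → X → 0 with P finitely generated free, and Y any finitely generated reflexive R-module, where (−)* denotes Hom_R(−, R). Then Ext^1_R(X, Y) is isomorphic as an R-module to the quotient of Hom_R(Y*, X) by the R-submodule consisting of those homomorphisms that factor through some projective R-module. -/

import Mathlib

open CategoryTheory

universe u

/-- `ModuleExt1 R M N` is the `R`-module `Ext¹_R(M, N)`. -/
noncomputable def ModuleExt1 (R : Type u) [CommRing R]
    (M N : Type u) [AddCommGroup M] [Module R M] [AddCommGroup N] [Module R N] :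
    ModuleCat.{u} R :=
  ((Ext R (ModuleCat.{u} R) 1).obj (Opposite.op (ModuleCat.of R M))).obj (ModuleCat.of R N)

/-- The homomorphisms `Y* → X` which factor through some projective `R`-module, as a
submodule of `Hom_R(Y*, X)` (realised as the span of the set of such homomorphisms;
this set is already closed under the module operations). -/
noncomputable def factorsThroughProjective (R : Type u) [CommRing R]
    (X Y : Type u) [AddCommGroup X] [Module R X] [AddCommGroup Y] [Module R Y] :
    Submodule R (Module.Dual R Y →ₗ[R] X) :=
  Submodule.span R {f : Module.Dual R Y →ₗ[R] X |
    ∃ (P : ModuleCat.{u} R), Module.Projective R P ∧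
      ∃ (g : Module.Dual R Y →ₗ[R] P) (h : P →ₗ[R] X), f = h.comp g}

/-!
Splicing a projective resolution of `X*` onto `0 → X* → P → X → 0` computes `Ext¹(X, W)`
as `Hom(X*, W)` modulo the maps that extend along `i : X* → P`. For `W = R` this quotient
vanishes, so `i* : P* → X** ≅ X` is onto, and `P*` is projective. For reflexive `Y`,
swapping the arguments of bilinear forms on `X* × Y*` identifies `Hom(X*, Y)` with
`Hom(Y*, X)`; under it the maps that extend along `i` become those factoring through
`P* → X`, and since `P* → X` is a surjection from a projective, these are all the maps
factoring through a projective.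
-/

universe v

open Limits

noncomputable section

namespace CategoryTheory.ShortComplex

variable {R : Type*} [Ring R] (S : ShortComplex (ModuleCat.{v} R))
  {D : Type*} [AddCommGroup D] [Module R D]

def moduleCatHomologyEquivOfExact (ι : D →ₗ[R] S.X₂) (N : Submodule R D)
    (hι : Function.Injective ι) (hexact : Function.Exact ι S.g.hom)
    (hN : N.map ι = LinearMap.range S.f.hom) :
    S.homology ≃ₗ[R] D ⧸ N :=
  let e : D ≃ₗ[R] LinearMap.ker S.g.hom :=
    (LinearEquiv.ofInjective ι hι).trans (LinearEquiv.ofEq _ _ hexact.linearMap_ker_eq.symm)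
  S.moduleCatHomologyIso.toLinearEquiv ≪≫ₗ (Submodule.Quotient.equiv _ _ e (by
      refine Submodule.map_injective_of_injective (LinearMap.ker S.g.hom).subtype_injective ?_
      rw [← LinearMap.range_comp, ← Submodule.map_comp]
      exact hN)).symm

end CategoryTheory.ShortComplex

namespace CategoryTheory.Projective

variable {C : Type*} [Category* C] [Abelian C] [EnoughProjectives C]

def syzygyStep {X₀ X₁ : C} (f : X₁ ⟶ X₀) : Σ' (X₂ : C) (d : X₂ ⟶ X₁), d ≫ f = 0 :=
  ⟨_, d f, (Category.assoc _ _ _).trans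
    ((congrArg (_ ≫ ·) (kernel.condition f)).trans comp_zero)⟩

end CategoryTheory.Projective

namespace Module

variable {R : Type*} [CommRing R] {M N X Y : Type*} [AddCommGroup M] [Module R M]
  [AddCommGroup N] [Module R N] [AddCommGroup X] [Module R X] [AddCommGroup Y] [Module R Y]

lemma Dual.transpose_surjective [IsReflexive R N] :
    Function.Surjective (Dual.transpose (R := R) (M := M) (M' := N)) := fun u =>
  ⟨(evalEquiv R N).symm.toLinearMap ∘ₗ u.dualMap ∘ₗ Dual.eval R M, by
    ext φ x
    change evalEquiv R N ((evalEquiv R N).symm _) φ = _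
    rw [LinearEquiv.apply_symm_apply]
    rfl⟩

variable (R X Y) in
def dualHomSwap [IsReflexive R X] [IsReflexive R Y] :
    (Dual R X →ₗ[R] Y) ≃ₗ[R] (Dual R Y →ₗ[R] X) :=
  (LinearEquiv.congrRight (evalEquiv R Y)).trans
    (LinearMap.lflip.trans (LinearEquiv.congrRight (evalEquiv R X).symm))

lemma dualHomSwap_comp_lcomp [IsReflexive R X] [IsReflexive R Y] (i : Dual R X →ₗ[R] M) :
    (dualHomSwap R X Y).toLinearMap ∘ₗ LinearMap.lcomp R Y i =
      LinearMap.compRight R ((evalEquiv R X).symm.toLinearMap ∘ₗ i.dualMap) ∘ₗ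
        Dual.transpose := by
  ext f y
  rfl

end Module

namespace ModuleExt1

variable {R : Type u} [CommRing R] {K P X : Type u}
  [AddCommGroup K] [Module R K] [AddCommGroup P] [Module R P] [AddCommGroup X] [Module R X]
  (i : K →ₗ[R] P) (p : P →ₗ[R] X)

/-- The complex `P ← F₀ ← F₁ ← ⋯` with `F₀ ↠ K` a projective cover and `F₁, F₂, …` successive
syzygies; it resolves `X` when `K → P → X → 0` is exact. -/
def presentationComplex : ChainComplex (ModuleCat.{u} R) ℕ :=
  ChainComplex.mk' (ModuleCat.of R P) (Projective.over (ModuleCat.of R K))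
    (Projective.π _ ≫ ModuleCat.ofHom i) Projective.syzygyStep

lemma presentationComplex_d_one_zero :
    (presentationComplex i).d 1 0 = Projective.π _ ≫ ModuleCat.ofHom i :=
  ChainComplex.mk'_d_1_0 _ _ _ _

lemma presentationComplex_exactAt_succ (n : ℕ) : (presentationComplex i).ExactAt (n + 1) := by
  rw [HomologicalComplex.exactAt_iff' _ (n + 2) (n + 1) n (by simp) (by simp)]
  refine (ShortComplex.exact_iff_of_iso ?_).2 (exact_d_f ((presentationComplex i).d (n + 1) n))
  exact ShortComplex.isoMk (ChainComplex.mk'XIso _ _ _ _ n) (Iso.refl _) (Iso.refl _)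
    ((Category.comp_id _).trans (ChainComplex.mk'_d _ _ _ _ n)).symm
    ((Category.id_comp _).trans (Category.comp_id _).symm)

instance [Module.Projective R P] (n : ℕ) : Projective ((presentationComplex i).X n) := by
  obtain (_ | _ | _ | n) := n
  · exact (IsProjective.iff_projective P).mp inferInstance
  all_goals apply Projective.projective_over

variable {i p}

lemma presentationComplex_d_one_zero_comp (hexact : Function.Exact i p) :
    (presentationComplex i).d 1 0 ≫ ModuleCat.ofHom p = 0 := by
  rw [presentationComplex_d_one_zero]
  ext x
  exact hexact.apply_apply_eq_zero _

lemma presentationComplex_exact_zero (hexact : Function.Exact i p) :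
    (ShortComplex.mk _ _ (presentationComplex_d_one_zero_comp hexact)).Exact := by
  rw [ShortComplex.moduleCat_exact_iff]
  intro x hx
  obtain ⟨k, rfl⟩ := (hexact x).mp hx
  obtain ⟨y, rfl⟩ :=
    (ModuleCat.epi_iff_surjective (Projective.π (ModuleCat.of R K))).1 inferInstance k
  exact ⟨y, ConcreteCategory.congr_hom (presentationComplex_d_one_zero i) y⟩

def presentationResolution [Module.Projective R P] (hp : Function.Surjective p)
    (hexact : Function.Exact i p) : ProjectiveResolution (ModuleCat.of R X) where
  complex := presentationComplex i
  π := (ChainComplex.toSingle₀Equiv _ _).symm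
    ⟨ModuleCat.ofHom p, presentationComplex_d_one_zero_comp hexact⟩
  quasiIso := ⟨fun n => by
    cases n
    · rw [ChainComplex.quasiIsoAt₀_iff, ShortComplex.quasiIso_iff_of_zeros']
      · refine (ShortComplex.exact_and_epi_g_iff_of_iso ?_).2
          ⟨presentationComplex_exact_zero hexact, (ModuleCat.epi_iff_surjective _).2 hp⟩
        exact ShortComplex.isoMk (Iso.refl _) (Iso.refl _) (Iso.refl _)
          ((Category.id_comp _).trans (Category.comp_id _).symm)
          ((Category.id_comp _).trans (Category.comp_id _).symm)
      all_goals rfl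
    · rw [quasiIsoAt_iff_exactAt']
      · apply presentationComplex_exactAt_succ
      · apply ChainComplex.exactAt_succ_single_obj⟩

lemma presentationComplex_exact_d_two_one (hi : Function.Injective i) :
    Function.Exact ((presentationComplex i).d 2 1).hom
      (Projective.π (ModuleCat.of R K)).hom := by
  have h := (HomologicalComplex.exactAt_iff' _ 2 1 0 (by simp) (by simp)).1
    (presentationComplex_exactAt_succ i 0)
  rw [ShortComplex.ShortExact.moduleCat_exact_iff_function_exact] at h
  have hd : ((presentationComplex i).d 1 0).hom = i ∘ₗ (Projective.π (ModuleCat.of R K)).hom :=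
    congrArg ModuleCat.Hom.hom (presentationComplex_d_one_zero i)
  exact hi.comp_exact_iff_exact.1 (hd ▸ h)

variable (i) (W : Type u) [AddCommGroup W] [Module R W]

abbrev coverPrecomp :
    (K →ₗ[R] W) →ₗ[R] (Projective.over (ModuleCat.of R K) ⟶ ModuleCat.of R W) :=
  (ModuleCat.homLinearEquiv (S := R)).symm.toLinearMap ∘ₗ
    LinearMap.lcomp R W (Projective.π (ModuleCat.of R K)).hom

abbrev homComplex : CochainComplex (ModuleCat.{u} R) ℕ :=
  (presentationComplex i).linearYonedaObj R (ModuleCat.of R W)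

lemma coverPrecomp_injective : Function.Injective (coverPrecomp (R := R) (K := K) W) :=
  (ModuleCat.homLinearEquiv (S := R)).symm.injective.comp
    (LinearMap.lcomp_injective_of_surjective _ ((ModuleCat.epi_iff_surjective _).1 inferInstance))

variable {i} in
lemma exact_coverPrecomp (hi : Function.Injective i) :
    Function.Exact (coverPrecomp (R := R) (K := K) W) ((homComplex i W).sc' 0 1 2).g.hom := by
  refine Function.Exact.of_ladder_linearEquiv_of_exact (e₁ := LinearEquiv.refl R _)
    (e₂ := (ModuleCat.homLinearEquiv (S := R)).symm)
    (e₃ := (ModuleCat.homLinearEquiv (S := R)).symm) rfl ?_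
    (LinearMap.exact_lcomp_of_exact_of_surjective W (presentationComplex_exact_d_two_one hi)
      ((ModuleCat.epi_iff_surjective _).1 inferInstance))
  ext φ
  rfl

lemma map_coverPrecomp_range_lcomp :
    (LinearMap.range (LinearMap.lcomp R W i)).map (coverPrecomp W) =
      LinearMap.range ((homComplex i W).sc' 0 1 2).f.hom := by
  have hf : ((homComplex i W).sc' 0 1 2).f.hom =
      (coverPrecomp W ∘ₗ LinearMap.lcomp R W i) ∘ₗ
        (ModuleCat.homLinearEquiv (S := R)).toLinearMap := by
    ext φ : 1
    change (presentationComplex i).d 1 0 ≫ φ = _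
    rw [presentationComplex_d_one_zero]
    rfl
  rw [← LinearMap.range_comp, hf]
  exact (LinearMap.range_comp_of_range_eq_top _ (LinearEquiv.range _)).symm

variable {i} [Module.Projective R P]

def equivQuotientRangeLcomp (hi : Function.Injective i) (hp : Function.Surjective p)
    (hexact : Function.Exact i p) :
    ModuleExt1 R X W ≃ₗ[R] (K →ₗ[R] W) ⧸ LinearMap.range (LinearMap.lcomp R W i) :=
  ((presentationResolution hp hexact).isoExt 1 (ModuleCat.of R W) ≪≫
    ShortComplex.homologyMapIso
      ((homComplex i W).isoSc' 0 1 2 (by simp) (by simp))).toLinearEquiv ≪≫ₗ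
    ((homComplex i W).sc' 0 1 2).moduleCatHomologyEquivOfExact (coverPrecomp W) _
      (coverPrecomp_injective W) (exact_coverPrecomp W hi) (map_coverPrecomp_range_lcomp i W)

lemma lcomp_surjective_of_subsingleton (hi : Function.Injective i) (hp : Function.Surjective p)
    (hexact : Function.Exact i p) (hW : Subsingleton (ModuleExt1 R X W)) :
    Function.Surjective (LinearMap.lcomp R W i) := by
  rw [← LinearMap.range_eq_top, ← Submodule.Quotient.subsingleton_iff]
  exact (equivQuotientRangeLcomp W hi hp hexact).symm.toEquiv.subsingleton

end ModuleExt1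

section

variable {R : Type u} [CommRing R] {Q X Y : Type u} [AddCommGroup Q] [Module R Q]
  [AddCommGroup X] [Module R X] [AddCommGroup Y] [Module R Y]

lemma factorsThroughProjective_eq_range_compRight [Module.Projective R Q] {π : Q →ₗ[R] X}
    (hπ : Function.Surjective π) :
    factorsThroughProjective R X Y = LinearMap.range (LinearMap.compRight R π) := by
  apply le_antisymm
  · rw [factorsThroughProjective, Submodule.span_le]
    rintro _ ⟨Q', hQ', g, h, rfl⟩
    obtain ⟨k, rfl⟩ := Module.projective_lifting_property (h := hQ') π h hπ
    exact ⟨k ∘ₗ g, rfl⟩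
  · rintro _ ⟨u, rfl⟩
    exact Submodule.subset_span ⟨ModuleCat.of R Q, ‹_›, u, π, rfl⟩

lemma map_dualHomSwap_range_lcomp [Module.IsReflexive R X] [Module.IsReflexive R Y]
    (i : Module.Dual R X →ₗ[R] Q) :
    (LinearMap.range (LinearMap.lcomp R Y i)).map (Module.dualHomSwap R X Y).toLinearMap =
      LinearMap.range
        (LinearMap.compRight R ((Module.evalEquiv R X).symm.toLinearMap ∘ₗ i.dualMap)) := by
  rw [← LinearMap.range_comp, Module.dualHomSwap_comp_lcomp,
    LinearMap.range_comp_of_range_eq_top _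
      (LinearMap.range_eq_top.2 Module.Dual.transpose_surjective)]

end

end

theorem ext_one_iso_stable_hom_general
    (R : Type u) [CommRing R]
    (X : Type u) [AddCommGroup X] [Module R X] [Module.IsReflexive R X]
    (hX : Subsingleton (ModuleExt1 R X R))
    (P : Type u) [AddCommGroup P] [Module R P] [Module.Free R P] [Module.Finite R P]
    (i : Module.Dual R X →ₗ[R] P) (p : P →ₗ[R] X)
    (hi : Function.Injective i) (hp : Function.Surjective p)
    (hexact : Function.Exact i p)
    (Y : Type u) [AddCommGroup Y] [Module R Y]
    [Module.IsReflexive R Y] :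
    Nonempty ((ModuleExt1 R X Y) ≃ₗ[R]
      ((Module.Dual R Y →ₗ[R] X) ⧸ factorsThroughProjective R X Y)) := by
  have hdual : Function.Surjective i.dualMap :=
    ModuleExt1.lcomp_surjective_of_subsingleton R hi hp hexact hX
  have hπ : Function.Surjective ((Module.evalEquiv R X).symm.toLinearMap ∘ₗ i.dualMap) :=
    (Module.evalEquiv R X).symm.surjective.comp hdual
  refine ⟨(ModuleExt1.equivQuotientRangeLcomp Y hi hp hexact).trans
    (Submodule.Quotient.equiv _ _ (Module.dualHomSwap R X Y) ?_)⟩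
  rw [map_dualHomSwap_range_lcomp,
    factorsThroughProjective_eq_range_compRight hπ]

/-- The key isomorphism in the proof of **Lemma 3.4**: if `R` is a commutative noetherian
ring, `X` a finitely generated reflexive `R`-module with `Ext¹_R(X, R) = 0` whose first
syzygy is `X*` (i.e. there is a short exact sequence `0 → X* → P → X → 0` with `P` finitely
generated free), and `Y` any finitely generated reflexive `R`-module, then
`Ext¹_R(X, Y) ≅ \underline{Hom}_R(Y*, X)`, the quotient of `Hom_R(Y*, X)` by the submodule
of homomorphisms factoring through a projective module. -/
theorem ext_one_iso_stable_hom
    (R : Type u) [CommRing R] [IsNoetherianRing R]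
    (X : Type u) [AddCommGroup X] [Module R X] [Module.Finite R X] [Module.IsReflexive R X]
    (hX : Subsingleton (ModuleExt1 R X R))
    (P : Type u) [AddCommGroup P] [Module R P] [Module.Free R P] [Module.Finite R P]
    (i : Module.Dual R X →ₗ[R] P) (p : P →ₗ[R] X)
    (hi : Function.Injective i) (hp : Function.Surjective p)
    (hexact : Function.Exact i p)
    (Y : Type u) [AddCommGroup Y] [Module R Y] [Module.Finite R Y]
    [Module.IsReflexive R Y] :
    Nonempty ((ModuleExt1 R X Y) ≃ₗ[R]
      ((Module.Dual R Y →ₗ[R] X) ⧸ factorsThroughProjective R X Y)) :=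
  ext_one_iso_stable_hom_general R X hX P i p hi hp hexact Y
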